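/- arXiv:2103.05163 — 2 statements merged into one kernel-verified Lean document; each statement's English description precedes it below -/
import Mathlib

section
/- Let F be a field of characteristic not 2, V a finite-dimensional F-vector space, and Q a quadratic form on V. If v, w ∈ V satisfy Q(v) = Q(w) ≠ 0, then there exists an isometry σ of (V, Q) (i.e., σ preserves Q) such that σ(v) = w. -/
open QuadraticMap

section Refl

variable {F V : Type*} [Field F] [AddCommGroup V] [Module F V]
  (Q : QuadraticForm F V) (u : V)

lemma Q_map_add (x y : V) : Q (x + y) = Q x + Q y + polar Q x y := by
  have h : polar Q x y = Q (x + y) - Q x - Q y := rfl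
  linear_combination -h

/-- Reflection in the hyperplane orthogonal to `u`, as a linear map. -/
noncomputable def reflMap : V →ₗ[F] V where
  toFun x := x - (polar Q x u / Q u) • u
  map_add' x y := by
    rw [polar_add_left, add_div, add_smul]
    abel
  map_smul' a x := by
    rw [polar_smul_left]
    simp only [smul_eq_mul, smul_sub, smul_smul, RingHom.id_apply]
    ring_nf
  
lemma reflMap_apply (x : V) : reflMap Q u x = x - (polar Q x u / Q u) • u := rfl

lemma Q_sub_smul (x : V) (c : F) :
    Q (x - c • u) = Q x - c * polar Q x u + c * c * Q u := by
  have h1 : Q (x + (-c) • u) = Q x + Q ((-c) • u) + polar Q x ((-c) • u) :=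
    Q_map_add Q x ((-c) • u)
  have h2 : polar Q x ((-c) • u) = (-c) * polar Q x u := by
    rw [polar_smul_right]; simp [smul_eq_mul]
  have h3 : Q ((-c) • u) = (c * c) • Q u := by
    rw [QuadraticMap.map_smul]; ring_nf
  rw [sub_eq_add_neg, ← neg_smul, h1, h2, h3]
  simp only [smul_eq_mul]; ring

lemma reflMap_isometry (hu : Q u ≠ 0) (x : V) : Q (reflMap Q u x) = Q x := by
  rw [reflMap_apply, Q_sub_smul]
  field_simp
  ring

lemma polar_self' (x : V) : polar Q x x = Q x + Q x := by
  have := polar_self Q x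
  rwa [two_smul] at this

lemma reflMap_involutive (hu : Q u ≠ 0) : Function.Involutive (reflMap Q u) := by
  intro x
  rw [reflMap_apply, reflMap_apply, polar_sub_left, polar_smul_left, polar_self']
  simp only [smul_eq_mul]
  have hc : (polar Q x u - polar Q x u / Q u * (Q u + Q u)) / Q u
      = -(polar Q x u / Q u) := by
    field_simp; ring
  rw [hc, neg_smul, sub_neg_eq_add]
  abel

/-- Reflection as a linear equivalence. -/
noncomputable def reflEquiv (hu : Q u ≠ 0) : V ≃ₗ[F] V :=
  LinearEquiv.ofInvolutive (reflMap Q u) (reflMap_involutive Q u hu)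

lemma reflEquiv_apply (hu : Q u ≠ 0) (x : V) :
    reflEquiv Q u hu x = x - (polar Q x u / Q u) • u := rfl

lemma reflEquiv_isometry (hu : Q u ≠ 0) (x : V) : Q (reflEquiv Q u hu x) = Q x :=
  reflMap_isometry Q u hu x

end Refl

/-- If `Q(v) = Q(w) ≠ 0` in a quadratic space over a field of characteristic not 2,
then some isometry of `(V, Q)` sends `v` to `w`. -/
theorem stmt0 {F V : Type*} [Field F] (hchar : (2 : F) ≠ 0)
    [AddCommGroup V] [Module F V] [FiniteDimensional F V]
    (Q : QuadraticForm F V) (v w : V) (hvw : Q v = Q w) (hv : Q v ≠ 0) :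
    ∃ σ : V ≃ₗ[F] V, (∀ x, Q (σ x) = Q x) ∧ σ v = w := by
  have h1 : Q (v + w) = Q v + Q w + polar Q v w := Q_map_add Q v w
  have h2 : Q (v - w) = Q v + Q w - polar Q v w := by
    have h3 := Q_map_add Q v (-w)
    rw [sub_eq_add_neg, h3, QuadraticMap.map_neg, polar_neg_right]; ring
  have hne : Q (v - w) ≠ 0 ∨ Q (v + w) ≠ 0 := by
    by_contra hcon
    push_neg at hcon
    have key : (2 : F) * ((2 : F) * Q v) = 0 := by
      linear_combination hcon.1 + hcon.2 - h1 - h2 + 2 * hvw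
    rcases mul_eq_zero.mp key with h | h
    · exact hchar h
    · rcases mul_eq_zero.mp h with h | h
      · exact hchar h
      · exact hv h
  rcases hne with h | h
  · refine ⟨reflEquiv Q (v - w) h, reflEquiv_isometry Q (v - w) h, ?_⟩
    rw [reflEquiv_apply]
    have hp : polar Q v (v - w) = Q (v - w) := by
      rw [polar_sub_right, h2, polar_self', hvw]
    rw [hp, div_self h, one_smul]
    abel
  · have hw : Q w ≠ 0 := hvw ▸ hv
    refine ⟨(reflEquiv Q (v + w) h).trans (reflEquiv Q w hw), fun x => ?_, ?_⟩
    · simp only [LinearEquiv.trans_apply]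
      rw [reflEquiv_isometry Q w hw, reflEquiv_isometry Q (v + w) h]
    · simp only [LinearEquiv.trans_apply]
      have step1 : reflEquiv Q (v + w) h v = -w := by
        rw [reflEquiv_apply]
        have hp : polar Q v (v + w) = Q (v + w) := by
          rw [polar_add_right, h1, polar_self', hvw]
        rw [hp, div_self h, one_smul]
        abel
      rw [step1, reflEquiv_apply, polar_neg_left, polar_self']
      have hd : -(Q w + Q w) / Q w = (-2 : F) := by field_simp; ring
      rw [hd, neg_smul, sub_neg_eq_add, two_smul]
      abel
end

section
/- Let F be a field closed under square roots (every element has a square root in F), V a finite-dimensional F-vector space, and Q a positive definite quadratic form on V (in the sense that Q(v) ≠ 0 for v ≠ 0, and values are squares times a common value allowing normalization). Then the special orthogonal group SO_Q(V) acts transitively on the set of lines (1-dimensional subspaces) of V. -/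
/-!
Since square roots exist, the two lines have generators `v`, `w` with `Q v = Q w`. When
`v ≠ w`, the reflection through `v - w` sends `v` to `w`, since `Q v = Q w` gives
`polar Q (v - w) v = Q (v - w)`. Following it with the reflection through `w` gives an
isometry of determinant `(-1)² = 1` sending `v` to `-w`, hence `⟨v⟩` to `⟨w⟩`; anisotropy
guarantees that all vectors reflected through are non-isotropic.
-/

open QuadraticMap Module

theorem LinearMap.det_id_sub_smulRight {R M : Type*} [CommRing R] [AddCommGroup M] [Module R M]
    [Module.Free R M] [Module.Finite R M] (f : Dual R M) (x : M) :
    LinearMap.det (LinearMap.id - f.smulRight x) = 1 - f x := by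
  classical
  let b := Module.Free.chooseBasis R M
  rw [← LinearMap.det_toMatrix b]
  have hM : LinearMap.toMatrix b b (LinearMap.id - f.smulRight x) =
      1 - Matrix.replicateCol Unit (b.repr x) * Matrix.replicateRow Unit (fun j => f (b j)) := by
    ext i j
    simp [LinearMap.toMatrix_apply, Matrix.one_apply, Matrix.mul_apply,
      Matrix.replicateCol_apply, Matrix.replicateRow_apply, mul_comm, Finsupp.single_apply, eq_comm]
  have hfx : f x = ∑ j, b.repr x j * f (b j) := by
    conv_lhs => rw [← b.sum_repr x]
    simp only [map_sum, map_smul, smul_eq_mul]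
  rw [hM, Matrix.det_one_sub_mul_comm, Matrix.det_unique, hfx]
  simp [Matrix.mul_apply, Matrix.replicateRow_apply, Matrix.replicateCol_apply, mul_comm]

theorem Module.det_reflection {R M : Type*} [CommRing R] [AddCommGroup M] [Module R M]
    [Module.Free R M] [Module.Finite R M] {x : M} {f : Dual R M} (h : f x = 2) :
    LinearMap.det (reflection h : M →ₗ[R] M) = -1 := by
  change LinearMap.det (preReflection x f) = -1
  rw [preReflection, LinearMap.det_id_sub_smulRight, h]
  norm_num

theorem Submodule.exists_ne_zero_eq_span_singleton_of_finrank_eq_one {K V : Type*}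
    [DivisionRing K] [AddCommGroup V] [Module K V] {L : Submodule K V} (h : finrank K L = 1) :
    ∃ v ≠ 0, L = K ∙ v :=
  ⟨_, (Projectivization.mk'' L h).rep_nonzero, by
    rw [← Projectivization.submodule_eq, Projectivization.submodule_mk'']⟩

namespace QuadraticMap

variable {F V : Type*} [Field F] [AddCommGroup V] [Module F V] (Q : QuadraticForm F V)

theorem inv_smul_polarBilin_apply_self {u : V} (hu : Q u ≠ 0) :
    ((Q u)⁻¹ • polarBilin Q u) u = 2 := by
  simp only [LinearMap.smul_apply, polarBilin_apply_apply, polar_self, smul_eq_mul, two_nsmul]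
  field_simp
  ring

noncomputable def reflection {u : V} (hu : Q u ≠ 0) : V ≃ₗ[F] V :=
  Module.reflection (inv_smul_polarBilin_apply_self Q hu)

variable {Q} {u : V}

theorem reflection_apply (hu : Q u ≠ 0) (y : V) :
    reflection Q hu y = y - ((Q u)⁻¹ * polar Q u y) • u :=
  Module.reflection_apply _ _

theorem reflection_apply_self (hu : Q u ≠ 0) : reflection Q hu u = -u :=
  Module.reflection_apply_self _

theorem map_reflection (hu : Q u ≠ 0) (y : V) : Q (reflection Q hu y) = Q y := by
  set c := (Q u)⁻¹ * polar Q u y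
  have hc : c * Q u = polar Q y u := by
    simp only [c, polar_comm Q u y]
    field_simp
  rw [reflection_apply, sub_eq_add_neg, ← neg_smul, QuadraticMap.map_add (⇑Q),
    QuadraticMap.map_smul, polar_smul_right, smul_eq_mul, smul_eq_mul]
  linear_combination c * hc

theorem det_reflection [FiniteDimensional F V] (hu : Q u ≠ 0) :
    LinearMap.det (reflection Q hu : V →ₗ[F] V) = -1 :=
  Module.det_reflection _

theorem reflection_sub_apply_of_eq {v w : V} (h : Q v = Q w) (hvw : Q (v - w) ≠ 0) :
    reflection Q hvw v = w := by
  have hpolar : polar Q (v - w) v = Q (v - w) := by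
    rw [polar_sub_left, polar_self, sub_eq_add_neg v w, QuadraticMap.map_add (⇑Q),
      QuadraticMap.map_neg, polar_neg_right, polar_comm, h, two_nsmul]
    ring
  rw [reflection_apply, hpolar, inv_mul_cancel₀ hvw, one_smul, sub_sub_cancel]

theorem exists_det_eq_one_isometry_map_span_eq [FiniteDimensional F V] (hQ : Q.Anisotropic)
    {v w : V} (h : Q v = Q w) :
    ∃ σ : V ≃ₗ[F] V, LinearMap.det (σ : V →ₗ[F] V) = 1 ∧ (∀ x, Q (σ x) = Q x) ∧
      (F ∙ v).map (σ : V →ₗ[F] V) = F ∙ w := by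
  by_cases hvw : v = w
  · exact ⟨LinearEquiv.refl F V, LinearMap.det_id, fun _ => rfl, by simp [hvw]⟩
  have hw : Q w ≠ 0 := fun hw => hvw (by rw [hQ v (h.trans hw), hQ w hw])
  have hvw' : Q (v - w) ≠ 0 := fun h0 => hvw (sub_eq_zero.1 (hQ _ h0))
  refine ⟨(reflection Q hvw').trans (reflection Q hw), ?_, fun x => ?_, ?_⟩
  · rw [LinearEquiv.coe_trans, LinearMap.det_comp, det_reflection, det_reflection]
    norm_num
  · rw [LinearEquiv.trans_apply, map_reflection, map_reflection]
  · rw [Submodule.map_span, Set.image_singleton, LinearEquiv.coe_coe, LinearEquiv.trans_apply,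
      reflection_sub_apply_of_eq h, reflection_apply_self, ← Set.neg_singleton,
      Submodule.span_neg]

theorem exists_ne_zero_map_smul_eq (hsq : ∀ a : F, ∃ b : F, b * b = a) {v : V} (hv : Q v ≠ 0)
    {c : F} (hc : c ≠ 0) : ∃ b : F, b ≠ 0 ∧ Q (b • v) = c := by
  obtain ⟨b, hb⟩ := hsq (c / Q v)
  refine ⟨b, fun hb0 => ?_, ?_⟩
  · rw [hb0, zero_mul, eq_comm, div_eq_zero_iff] at hb
    exact hb.elim hc hv
  · rw [QuadraticMap.map_smul, smul_eq_mul, hb, div_mul_cancel₀ c hv]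

end QuadraticMap

/-- Over a field closed under square roots, for a positive definite (anisotropic)
quadratic form `Q`, the group `SO_Q(V)` acts transitively on lines of `V`. -/
theorem stmt1 {F V : Type*} [Field F] (hsq : ∀ a : F, ∃ b : F, b * b = a)
    [AddCommGroup V] [Module F V] [FiniteDimensional F V]
    (Q : QuadraticForm F V) (hpos : ∀ v : V, v ≠ 0 → Q v ≠ 0)
    (L₁ L₂ : Submodule F V)
    (h₁ : Module.finrank F L₁ = 1) (h₂ : Module.finrank F L₂ = 1) :
    ∃ σ : V ≃ₗ[F] V, LinearMap.det (σ : V →ₗ[F] V) = 1 ∧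
      (∀ x, Q (σ x) = Q x) ∧ Submodule.map (σ : V →ₗ[F] V) L₁ = L₂ := by
  have hQ : Q.Anisotropic := fun v hv => by_contra fun hv0 => hpos v hv0 hv
  obtain ⟨v, hv, rfl⟩ := Submodule.exists_ne_zero_eq_span_singleton_of_finrank_eq_one h₁
  obtain ⟨w, hw, rfl⟩ := Submodule.exists_ne_zero_eq_span_singleton_of_finrank_eq_one h₂
  obtain ⟨b, hb, hbv⟩ := exists_ne_zero_map_smul_eq hsq (hpos v hv) (hpos w hw)
  rw [← Submodule.span_singleton_smul_eq (IsUnit.mk0 b hb)]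
  exact exists_det_eq_one_isometry_map_span_eq hQ hbv
end
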